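/- Let d = 3 and suppose a > 0, the kernels of A₁ and A₂ satisfy ker(A₁) = span(η₁) and ker(A₂) = span(η₂) for vectors η₁, η₂ ∈ ℝ³ (so A₁ and A₂ have rank two), and the vectors {e₁, η₁, η₂} are linearly independent in ℝ³. Then the homogenized matrix A* is positive definite, i.e. A*x·x > 0 for every nonzero x ∈ ℝ³. -/

import Mathlib

/-!
Put `t := (A₂ - A₁)e₁ · x / a`, `y₁ := x + (1 - θ) t e₁` and `y₂ := x - θ t e₁`. Expanding the
quadratic forms gives `A*x · x = θ A₁y₁ · y₁ + (1 - θ) A₂y₂ · y₂`: this is the energy of the simple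
laminate, minimised over `t`. Both terms are nonnegative. If both vanish, then `y₁ ∈ ker A₁ = ℝη₁`,
`y₂ ∈ ker A₂ = ℝη₂` and `y₁ - y₂ = t e₁`, so the independence of `e₁, η₁, η₂` forces
`y₁ = y₂ = 0`, whence `x = θ y₁ + (1 - θ) y₂ = 0`.
-/

open Matrix

namespace Matrix

variable {n : Type*} [Fintype n]

theorem IsSymm.mulVec_dotProduct_comm {α : Type*} [CommSemiring α] {A : Matrix n n α}
    (hA : A.IsSymm) (x y : n → α) :
    A *ᵥ x ⬝ᵥ y = A *ᵥ y ⬝ᵥ x := by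
  rw [dotProduct_comm, dotProduct_mulVec, ← mulVec_transpose, hA.eq]

theorem PosSemidef.mulVec_dotProduct_nonneg {A : Matrix n n ℝ} (hA : A.PosSemidef) (x : n → ℝ) :
    0 ≤ A *ᵥ x ⬝ᵥ x := by
  simpa [dotProduct_comm] using hA.dotProduct_mulVec_nonneg x

theorem PosSemidef.mulVec_dotProduct_pos {A : Matrix n n ℝ} (hA : A.PosSemidef) {x : n → ℝ}
    (hx : A *ᵥ x ≠ 0) : 0 < A *ᵥ x ⬝ᵥ x := by
  refine (hA.mulVec_dotProduct_nonneg x).lt_of_ne' fun h ↦ hx ?_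
  rw [← hA.dotProduct_mulVec_zero_iff, star_trivial, dotProduct_comm, h]

theorem vecMulVec_self_mulVec_dotProduct {α : Type*} [CommSemiring α] (u x : n → α) :
    vecMulVec u u *ᵥ x ⬝ᵥ x = (u ⬝ᵥ x) ^ 2 := by
  rw [vecMulVec_mulVec, op_smul_eq_smul, smul_dotProduct, smul_eq_mul, sq]

end Matrix

theorem LinearIndependent.eq_zero_of_sub_mem_span {R V : Type*} [Ring R] [AddCommGroup V]
    [Module R V] {e η₁ η₂ y₁ y₂ : V} (hind : LinearIndependent R ![e, η₁, η₂])
    (hy₁ : y₁ ∈ R ∙ η₁) (hy₂ : y₂ ∈ R ∙ η₂) (hy : y₁ - y₂ ∈ R ∙ e) : y₁ = 0 ∧ y₂ = 0 := by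
  obtain ⟨k₁, rfl⟩ := Submodule.mem_span_singleton.mp hy₁
  obtain ⟨k₂, rfl⟩ := Submodule.mem_span_singleton.mp hy₂
  obtain ⟨t, ht⟩ := Submodule.mem_span_singleton.mp hy
  have hk := Fintype.linearIndependent_iff.mp hind ![-t, k₁, -k₂] (by
    simp [Fin.sum_univ_three, ht])
  have hk₁ : k₁ = 0 := hk 1
  have hk₂ : k₂ = 0 := neg_eq_zero.mp (hk 2)
  simp [hk₁, hk₂]

section Homogenization

variable {n : Type*} [Fintype n] {A₁ A₂ : Matrix n n ℝ}

theorem laminate_quadForm_eq (h₁ : A₁.IsSymm) (h₂ : A₂.IsSymm) (θ t : ℝ) (e x : n → ℝ) :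
    θ * (A₁ *ᵥ (x + ((1 - θ) * t) • e) ⬝ᵥ (x + ((1 - θ) * t) • e))
      + (1 - θ) * (A₂ *ᵥ (x - (θ * t) • e) ⬝ᵥ (x - (θ * t) • e))
      = θ * (A₁ *ᵥ x ⬝ᵥ x) + (1 - θ) * (A₂ *ᵥ x ⬝ᵥ x)
        - 2 * θ * (1 - θ) * t * ((A₂ - A₁) *ᵥ e ⬝ᵥ x)
        + θ * (1 - θ) * t ^ 2 * ((1 - θ) * (A₁ *ᵥ e ⬝ᵥ e) + θ * (A₂ *ᵥ e ⬝ᵥ e)) := by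
  simp only [mulVec_add, mulVec_sub, mulVec_smul, sub_mulVec, add_dotProduct, sub_dotProduct,
    dotProduct_add, dotProduct_sub, smul_dotProduct, dotProduct_smul, smul_eq_mul,
    h₁.mulVec_dotProduct_comm x e, h₂.mulVec_dotProduct_comm x e]
  ring

theorem homogenized_quadForm_eq (θ a : ℝ) (e x : n → ℝ) :
    (θ • A₁ + (1 - θ) • A₂ - (θ * (1 - θ) / a) • vecMulVec ((A₂ - A₁) *ᵥ e) ((A₂ - A₁) *ᵥ e))
        *ᵥ x ⬝ᵥ x
      = θ * (A₁ *ᵥ x ⬝ᵥ x) + (1 - θ) * (A₂ *ᵥ x ⬝ᵥ x)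
        - θ * (1 - θ) / a * ((A₂ - A₁) *ᵥ e ⬝ᵥ x) ^ 2 := by
  simp only [sub_mulVec, add_mulVec, smul_mulVec, sub_dotProduct, add_dotProduct,
    smul_dotProduct, smul_eq_mul, vecMulVec_self_mulVec_dotProduct]

theorem homogenized_quadForm_eq_laminate (h₁ : A₁.IsSymm) (h₂ : A₂.IsSymm) {θ a t : ℝ}
    {e x : n → ℝ} (ha : a = (1 - θ) * (A₁ *ᵥ e ⬝ᵥ e) + θ * (A₂ *ᵥ e ⬝ᵥ e))
    (ht : a * t = (A₂ - A₁) *ᵥ e ⬝ᵥ x) :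
    (θ • A₁ + (1 - θ) • A₂ - (θ * (1 - θ) / a) • vecMulVec ((A₂ - A₁) *ᵥ e) ((A₂ - A₁) *ᵥ e))
        *ᵥ x ⬝ᵥ x
      = θ * (A₁ *ᵥ (x + ((1 - θ) * t) • e) ⬝ᵥ (x + ((1 - θ) * t) • e))
        + (1 - θ) * (A₂ *ᵥ (x - (θ * t) • e) ⬝ᵥ (x - (θ * t) • e)) := by
  rw [homogenized_quadForm_eq, laminate_quadForm_eq h₁ h₂, ← ha, ← ht]
  rcases eq_or_ne a 0 with rfl | ha0
  · simp
  · field_simp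
    ring

end Homogenization

theorem homogenized_matrix_posDef_dim3_general
    (θ : ℝ) (hθ : θ ∈ Set.Ioo (0 : ℝ) 1)
    (A₁ A₂ : Matrix (Fin 3) (Fin 3) ℝ)
    (hA₁ : A₁.PosSemidef) (hA₂ : A₂.PosSemidef)
    (e₁ : Fin 3 → ℝ)
    (η₁ η₂ : Fin 3 → ℝ)
    (hker₁ : LinearMap.ker A₁.mulVecLin = Submodule.span ℝ {η₁})
    (hker₂ : LinearMap.ker A₂.mulVecLin = Submodule.span ℝ {η₂})
    (hind : LinearIndependent ℝ ![e₁, η₁, η₂])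
    (a : ℝ)
    (ha_def : a = (1 - θ) * (A₁.mulVec e₁ ⬝ᵥ e₁) + θ * (A₂.mulVec e₁ ⬝ᵥ e₁))
    (ha : 0 < a)
    (Astar : Matrix (Fin 3) (Fin 3) ℝ)
    (hAstar : Astar = θ • A₁ + (1 - θ) • A₂
      - (θ * (1 - θ) / a) • vecMulVec ((A₂ - A₁).mulVec e₁) ((A₂ - A₁).mulVec e₁)) :
    ∀ x : Fin 3 → ℝ, x ≠ 0 → 0 < Astar.mulVec x ⬝ᵥ x := by
  intro x hx
  obtain ⟨hθ₀, hθ₁⟩ := hθ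
  set t := (A₂ - A₁) *ᵥ e₁ ⬝ᵥ x / a
  set y₁ := x + ((1 - θ) * t) • e₁
  set y₂ := x - (θ * t) • e₁
  rw [hAstar, homogenized_quadForm_eq_laminate
    (isHermitian_iff_isSymm.mp hA₁.isHermitian) (isHermitian_iff_isSymm.mp hA₂.isHermitian)
    ha_def (mul_div_cancel₀ _ ha.ne')]
  have hy : A₁ *ᵥ y₁ ≠ 0 ∨ A₂ *ᵥ y₂ ≠ 0 := by
    by_contra! h
    have hy₁ : y₁ ∈ ℝ ∙ η₁ := by rw [← hker₁]; exact h.1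
    have hy₂ : y₂ ∈ ℝ ∙ η₂ := by rw [← hker₂]; exact h.2
    obtain ⟨hy₁0, hy₂0⟩ := hind.eq_zero_of_sub_mem_span hy₁ hy₂
      (Submodule.mem_span_singleton.mpr ⟨t, by module⟩)
    have hx_avg : x = θ • y₁ + (1 - θ) • y₂ := by module
    exact hx (by rw [hx_avg, hy₁0, hy₂0, smul_zero, smul_zero, add_zero])
  have hθ₁' : 0 < 1 - θ := sub_pos.mpr hθ₁
  rcases hy with h | h
  · exact add_pos_of_pos_of_nonneg (mul_pos hθ₀ (hA₁.mulVec_dotProduct_pos h))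
      (mul_nonneg hθ₁'.le (hA₂.mulVec_dotProduct_nonneg _))
  · exact add_pos_of_nonneg_of_pos (mul_nonneg hθ₀.le (hA₁.mulVec_dotProduct_nonneg _))
      (mul_pos hθ₁' (hA₂.mulVec_dotProduct_pos h))

/-- In dimension three, if `a > 0`, `ker A₁ = span{η₁}`, `ker A₂ = span{η₂}` and
`{e₁, η₁, η₂}` are linearly independent, then the homogenized matrix `A*` is
positive definite. -/
theorem homogenized_matrix_posDef_dim3
    (θ : ℝ) (hθ : θ ∈ Set.Ioo (0 : ℝ) 1)
    (A₁ A₂ : Matrix (Fin 3) (Fin 3) ℝ)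
    (hA₁ : A₁.PosSemidef) (hA₂ : A₂.PosSemidef)
    (e₁ : Fin 3 → ℝ) (he₁ : e₁ = Pi.single 0 1)
    (η₁ η₂ : Fin 3 → ℝ)
    (hker₁ : LinearMap.ker A₁.mulVecLin = Submodule.span ℝ {η₁})
    (hker₂ : LinearMap.ker A₂.mulVecLin = Submodule.span ℝ {η₂})
    (hind : LinearIndependent ℝ ![e₁, η₁, η₂])
    (a : ℝ)
    (ha_def : a = (1 - θ) * (A₁.mulVec e₁ ⬝ᵥ e₁) + θ * (A₂.mulVec e₁ ⬝ᵥ e₁))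
    (ha : 0 < a)
    (Astar : Matrix (Fin 3) (Fin 3) ℝ)
    (hAstar : Astar = θ • A₁ + (1 - θ) • A₂
      - (θ * (1 - θ) / a) • vecMulVec ((A₂ - A₁).mulVec e₁) ((A₂ - A₁).mulVec e₁)) :
    ∀ x : Fin 3 → ℝ, x ≠ 0 → 0 < Astar.mulVec x ⬝ᵥ x :=
  homogenized_matrix_posDef_dim3_general θ hθ A₁ A₂ hA₁ hA₂ e₁ η₁ η₂ hker₁ hker₂ hind a ha_def ha
    Astar hAstar
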